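/- If K < 0 and H = 0 (isotropic second fundamental form), then for m > 0, v(2m) = (8/3) m³ K < 0, so the derivative dσ₋/dr = (K/3) b₋ r⁴/(√P(−b₋v + √P)) with b₋ = −1 diverges as r → 2m⁺; hence the ingoing phase coordinate is unbounded near the horizon. -/

import Mathlib

/-!
At the horizon `r = 2m` the term `(1 - 2m/r) r⁴` of `P` vanishes, so `√P → |v(2m)|`. Since
`v(2m) = (8/3) m³ K < 0`, the factor `v + √P` of the denominator of `dσ₋/dr` tends to
`v(2m) + |v(2m)| = 0`, while staying positive for `r > 2m` because there `√P > |v|`.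
The numerator `-(K/3) r⁴` tends to the positive constant `-(K/3) (2m)⁴`, so the quotient
tends to `+∞`.
-/

open Filter Topology Set

theorem Filter.Tendsto.pos_div_nhdsGT_zero {α : Type*} {l : Filter α} {f g : α → ℝ} {c : ℝ}
    (hf : Tendsto f l (𝓝 c)) (hc : 0 < c) (hg : Tendsto g l (𝓝[>] 0)) :
    Tendsto (fun x => f x / g x) l atTop := by
  simp only [div_eq_mul_inv]
  exact hf.pos_mul_atTop hc hg.inv_tendsto_nhdsGT_zero

theorem add_sqrt_sq_add_pos (w : ℝ) {q : ℝ} (hq : 0 < q) : 0 < w + √(w ^ 2 + q) := by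
  have h : |w| < √(w ^ 2 + q) := by
    rw [← Real.sqrt_sq_eq_abs]
    exact Real.sqrt_lt_sqrt (sq_nonneg w) (by linarith)
  linarith [neg_abs_le w]

theorem tendsto_sqrt_mul_add_sqrt_nhdsGT_zero {α : Type*} {l : Filter α} {w q : α → ℝ}
    {w₀ : ℝ} (hw : Tendsto w l (𝓝 w₀)) (hw₀ : w₀ ≤ 0) (hq : Tendsto q l (𝓝 0))
    (hq_pos : ∀ᶠ x in l, 0 < q x) :
    Tendsto (fun x => √(w x ^ 2 + q x) * (w x + √(w x ^ 2 + q x))) l (𝓝[>] 0) := by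
  have hsqrt : Tendsto (fun x => √(w x ^ 2 + q x)) l (𝓝 (-w₀)) := by
    have h := ((hw.pow 2).add hq).sqrt
    rwa [add_zero, Real.sqrt_sq_eq_abs, abs_of_nonpos hw₀] at h
  refine tendsto_nhdsWithin_iff.mpr ⟨?_, ?_⟩
  · simpa using hsqrt.mul (hw.add hsqrt)
  · filter_upwards [hq_pos] with x hx
    exact mul_pos (Real.sqrt_pos.mpr (by positivity)) (add_sqrt_sq_add_pos (w x) hx)

section Horizon

variable {m : ℝ}

theorem horizon_term_pos {r : ℝ} (hm : 0 < m) (hr : 2 * m < r) : 0 < (1 - 2 * m / r) * r ^ 4 := by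
  have hr₀ : 0 < r := by linarith
  have : 2 * m / r < 1 := (div_lt_one hr₀).mpr hr
  have : 0 < 1 - 2 * m / r := by linarith
  positivity

theorem tendsto_horizon_term (hm : 0 < m) :
    Tendsto (fun r => (1 - 2 * m / r) * r ^ 4) (𝓝[>] (2 * m)) (𝓝 0) := by
  have hcont : ContinuousAt (fun r => (1 - 2 * m / r) * r ^ 4) (2 * m) := by
    fun_prop (disch := positivity)
  have h : Tendsto _ (𝓝[>] (2 * m)) (𝓝 ((1 - 2 * m / (2 * m)) * (2 * m) ^ 4)) :=
    hcont.continuousWithinAt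
  rwa [div_self (by positivity), sub_self, zero_mul] at h

end Horizon

theorem isotropic_case_ingoing_phase_diverges (m K H : ℝ) (hm : 0 < m) (hK : K < 0)
    (hH : H = 0) :
    let v : ℝ → ℝ := fun r => K * r ^ 3 / 3 - H
    let P : ℝ → ℝ := fun r => (v r) ^ 2 + (1 - 2 * m / r) * r ^ 4
    let bminus : ℝ := -1
    let g : ℝ → ℝ := fun r =>
      (K / 3) * bminus * r ^ 4 / (Real.sqrt (P r) * (-(bminus * v r) + Real.sqrt (P r)))
    v (2 * m) = (8 / 3) * m ^ 3 * K ∧ v (2 * m) < 0 ∧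
      Filter.Tendsto (fun r => |g r|) (nhdsWithin (2 * m) (Set.Ioi (2 * m)))
        Filter.atTop := by
  intro v P bminus g
  have hv : v (2 * m) = (8 / 3) * m ^ 3 * K := by simp only [v, hH]; ring
  have hv_neg : v (2 * m) < 0 := by rw [hv]; nlinarith [pow_pos hm 3]
  refine ⟨hv, hv_neg, ?_⟩
  have hv_lim : Tendsto v (𝓝[>] (2 * m)) (𝓝 (v (2 * m))) :=
    (by fun_prop : Continuous v).continuousWithinAt
  have hden := tendsto_sqrt_mul_add_sqrt_nhdsGT_zero hv_lim hv_neg.le (tendsto_horizon_term hm)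
    (eventually_nhdsWithin_of_forall fun r hr => horizon_term_pos hm hr)
  have hnum : Tendsto (fun r => (K / 3) * bminus * r ^ 4) (𝓝[>] (2 * m))
      (𝓝 ((K / 3) * bminus * (2 * m) ^ 4)) :=
    (by fun_prop : Continuous fun r : ℝ => (K / 3) * bminus * r ^ 4).continuousWithinAt
  have hnum_pos : 0 < (K / 3) * bminus * (2 * m) ^ 4 := by
    simp only [bminus]; nlinarith [pow_pos hm 4]
  refine tendsto_abs_atTop_atTop.comp ((hnum.pos_div_nhdsGT_zero hnum_pos hden).congr fun r => ?_)
  simp only [g, P, bminus]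
  ring_nf
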